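/- (Existence of optimal stationary policy) For a randomly-terminated process on a finite graph, for every starting node x there exists a simple path ȳ ∈ Y(x) (i.e., a path where y_k = y_m implies y_{k+1} = y_{m+1}) achieving the minimum expected cost: J(ȳ) = min_{y ∈ Y(x)} J(y). Equivalently, there is a control mapping μ: X → X with μ(x') ∈ N(x') whose generated path from x is optimal. -/

import Mathlib

open scoped BigOperators

/-- Cost of the finite path `y 0, ..., y t`. -/
noncomputable def pathCost {X : Type*} (K : X → X → ℝ) (q : X → ℝ) (y : ℕ → X) (t : ℕ) : ℝ :=
  (∑ k ∈ Finset.range t, K (y k) (y (k + 1))) + q (y t)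

/-- Expected cost of an infinite path with per-step termination probability `p`:
`J(y) = ∑_{t=1}^∞ (1-p)^{t-1} p · Cost(y_0,...,y_t)`. -/
noncomputable def Jcost {X : Type*} (K : X → X → ℝ) (q : X → ℝ) (p : ℝ) (y : ℕ → X) : ℝ :=
  ∑' t : ℕ, (1 - p) ^ t * p * pathCost K q y (t + 1)


/-!
Writing `β = 1 - p`, the expected cost satisfies the one-step recursion
`J y = c (y 0) (y 1) + β J (y 1, y 2, …)` with `c a b = K a b + p q b`.
The Bellman operator `V ↦ (a ↦ min_{b ∈ N a} c a b + β V b)` is a `β`-contraction on `X → ℝ`,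
so it has a fixed point `V`; let `μ` pick a minimiser at every node. Along any admissible path
`y` the defects `d n = J (y n, y (n+1), …) - V (y n)` are bounded and satisfy
`d n ≥ β d (n+1)`, with equality along the orbit of `μ`; hence `V x ≤ J y`, with equality for
the orbit of `μ`.
-/

open Filter Topology

section Cost

variable {X : Type*} {K : X → X → ℝ} {q : X → ℝ} {p A B : ℝ}

lemma pathCost_succ (K : X → X → ℝ) (q : X → ℝ) (y : ℕ → X) (t : ℕ) :
    pathCost K q y (t + 1) = K (y 0) (y 1) + pathCost K q (fun n => y (n + 1)) t := by
  simp only [pathCost, Finset.sum_range_succ']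
  ring

lemma abs_pathCost_le (hK : ∀ a b, |K a b| ≤ A) (hq : ∀ a, |q a| ≤ B) (y : ℕ → X) (t : ℕ) :
    |pathCost K q y t| ≤ A * t + B :=
  calc |(∑ k ∈ Finset.range t, K (y k) (y (k + 1))) + q (y t)|
      ≤ (∑ k ∈ Finset.range t, |K (y k) (y (k + 1))|) + |q (y t)| :=
        (abs_add_le _ _).trans (add_le_add_left (Finset.abs_sum_le_sum_abs _ _) _)
    _ ≤ (∑ _k ∈ Finset.range t, A) + B := by gcongr with k <;> apply_assumption
    _ = A * t + B := by simp [mul_comm]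

lemma summable_geometric_mul_affine {β : ℝ} (hβ0 : 0 ≤ β) (hβ1 : β < 1) (a b : ℝ) :
    Summable fun t : ℕ => β ^ t * (a * t + b) := by
  have hlin : Summable fun t : ℕ => (t : ℝ) * β ^ t := by
    simpa using summable_pow_mul_geometric_of_norm_lt_one 1 (by rwa [Real.norm_of_nonneg hβ0])
  have hgeom := summable_geometric_of_lt_one hβ0 hβ1
  exact ((hlin.mul_left a).add (hgeom.mul_left b)).congr fun t => by ring

lemma abs_Jcost_term_le (hp : 0 < p) (hp1 : p < 1) (hK : ∀ a b, |K a b| ≤ A)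
    (hq : ∀ a, |q a| ≤ B) (y : ℕ → X) (t : ℕ) :
    |(1 - p) ^ t * p * pathCost K q y (t + 1)| ≤ (1 - p) ^ t * p * (A * (t + 1) + B) := by
  rw [abs_mul, abs_mul, abs_pow, abs_of_pos (sub_pos.2 hp1), abs_of_pos hp]
  gcongr
  exact_mod_cast abs_pathCost_le hK hq y (t + 1)

lemma summable_Jcost_bound (hp : 0 < p) (hp1 : p < 1) :
    Summable fun t : ℕ => (1 - p) ^ t * p * (A * (t + 1) + B) :=
  (summable_geometric_mul_affine (sub_nonneg.2 hp1.le) (sub_lt_self 1 hp) (p * A)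
    (p * (A + B))).congr fun t => by ring

lemma summable_Jcost_terms (hp : 0 < p) (hp1 : p < 1) (hK : ∀ a b, |K a b| ≤ A)
    (hq : ∀ a, |q a| ≤ B) (y : ℕ → X) :
    Summable fun t : ℕ => (1 - p) ^ t * p * pathCost K q y (t + 1) :=
  (summable_Jcost_bound hp hp1).of_norm_bounded (abs_Jcost_term_le hp hp1 hK hq y)

lemma exists_abs_Jcost_le (hp : 0 < p) (hp1 : p < 1) (hK : ∀ a b, |K a b| ≤ A)
    (hq : ∀ a, |q a| ≤ B) : ∃ C, ∀ y : ℕ → X, |Jcost K q p y| ≤ C :=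
  ⟨_, fun y => by
    rw [Jcost, ← Real.norm_eq_abs]
    exact tsum_of_norm_bounded (summable_Jcost_bound hp hp1).hasSum
      (abs_Jcost_term_le hp hp1 hK hq y)⟩

/-- Expected cost of the move `a → b`: the process stops at `b` with probability `p`, and then
pays the terminal cost `q b`. -/
def stepCost (K : X → X → ℝ) (q : X → ℝ) (p : ℝ) (a b : X) : ℝ :=
  K a b + p * q b

lemma Jcost_eq_stepCost_add (hp : 0 < p) (hp1 : p < 1) (hK : ∀ a b, |K a b| ≤ A)
    (hq : ∀ a, |q a| ≤ B) (y : ℕ → X) :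
    Jcost K q p y = stepCost K q p (y 0) (y 1) + (1 - p) * Jcost K q p (fun n => y (n + 1)) := by
  set z : ℕ → X := fun n => y (n + 1)
  have hβ0 : 0 ≤ 1 - p := sub_nonneg.2 hp1.le
  have hβ1 : 1 - p < 1 := sub_lt_self 1 hp
  have hz := summable_Jcost_terms hp hp1 hK hq z
  have hgeom : Summable fun t : ℕ => (1 - p) ^ t * p * K (y 0) (y 1) :=
    ((summable_geometric_of_lt_one hβ0 hβ1).mul_right p).mul_right _
  have htail : Summable fun t : ℕ => (1 - p) ^ t * p * pathCost K q z t := by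
    rw [← summable_nat_add_iff 1]
    exact (hz.mul_left (1 - p)).congr fun t => by ring
  calc Jcost K q p y
      = ∑' t : ℕ, ((1 - p) ^ t * p * K (y 0) (y 1) + (1 - p) ^ t * p * pathCost K q z t) :=
        tsum_congr fun t => by rw [pathCost_succ]; ring
    _ = (∑' t : ℕ, (1 - p) ^ t) * p * K (y 0) (y 1)
          + (p * q (z 0) + ∑' t : ℕ, (1 - p) * ((1 - p) ^ t * p * pathCost K q z (t + 1))) := by
        rw [hgeom.tsum_add htail, tsum_mul_right, tsum_mul_right, htail.tsum_eq_zero_add]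
        congr 2
        · simp [pathCost]
        · exact tsum_congr fun t => by ring
    _ = stepCost K q p (y 0) (y 1) + (1 - p) * Jcost K q p z := by
        rw [tsum_mul_left, tsum_geometric_of_lt_one hβ0 hβ1, sub_sub_cancel,
          inv_mul_cancel₀ hp.ne', stepCost, Jcost]
        ring

lemma Jcost_tail_eq_stepCost_add (hp : 0 < p) (hp1 : p < 1) (hK : ∀ a b, |K a b| ≤ A)
    (hq : ∀ a, |q a| ≤ B) (y : ℕ → X) (n : ℕ) :
    Jcost K q p (fun m => y (m + n)) =
      stepCost K q p (y n) (y (n + 1)) + (1 - p) * Jcost K q p (fun m => y (m + (n + 1))) := by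
  simpa only [zero_add, add_comm 1 n, add_right_comm _ 1 n, add_assoc]
    using Jcost_eq_stepCost_add hp hp1 hK hq fun m => y (m + n)

end Cost

lemma nonneg_of_mul_succ_le {β C : ℝ} {d : ℕ → ℝ} (hβ0 : 0 ≤ β) (hβ1 : β < 1)
    (hC : ∀ n, -C ≤ d n) (hd : ∀ n, β * d (n + 1) ≤ d n) : 0 ≤ d 0 := by
  have hpow : ∀ n, β ^ n * d n ≤ d 0 := by
    intro n
    induction n with
    | zero => simp
    | succ n ih =>
      calc β ^ (n + 1) * d (n + 1) = β ^ n * (β * d (n + 1)) := by ring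
        _ ≤ β ^ n * d n := mul_le_mul_of_nonneg_left (hd n) (pow_nonneg hβ0 n)
        _ ≤ d 0 := ih
  have hlim : Tendsto (fun n => β ^ n * -C) atTop (𝓝 0) := by
    simpa using (tendsto_pow_atTop_nhds_zero_of_lt_one hβ0 hβ1).mul_const (-C)
  exact le_of_tendsto' hlim fun n =>
    (mul_le_mul_of_nonneg_left (hC n) (pow_nonneg hβ0 n)).trans (hpow n)

lemma eq_zero_of_eq_mul_succ {β C : ℝ} {d : ℕ → ℝ} (hβ0 : 0 ≤ β) (hβ1 : β < 1)
    (hC : ∀ n, |d n| ≤ C) (hd : ∀ n, d n = β * d (n + 1)) : d 0 = 0 := by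
  have hle : 0 ≤ -d 0 := nonneg_of_mul_succ_le (d := fun n => -d n) (C := C) hβ0 hβ1
    (fun n => by linarith [le_abs_self (d n), hC n]) fun n => by rw [hd n]; linarith
  have hge : 0 ≤ d 0 := nonneg_of_mul_succ_le (C := C) hβ0 hβ1
    (fun n => by linarith [neg_abs_le (d n), hC n]) fun n => (hd n).ge
  linarith

section Bellman

variable {X : Type*} (N : X → Finset X) (hN : ∀ x, (N x).Nonempty) (c : X → X → ℝ) (β : ℝ)

def bellman (V : X → ℝ) (a : X) : ℝ :=
  (N a).inf' (hN a) fun b => c a b + β * V b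

variable {N c β}

lemma bellman_le (V : X → ℝ) {a b : X} (hb : b ∈ N a) : bellman N hN c β V a ≤ c a b + β * V b :=
  Finset.inf'_le _ hb

lemma bellman_le_add (hβ0 : 0 ≤ β) (V W : X → ℝ) (C : ℝ) (hVW : ∀ b, V b ≤ W b + C) (a : X) :
    bellman N hN c β V a ≤ bellman N hN c β W a + β * C := by
  obtain ⟨b, hb, hWb⟩ := Finset.exists_mem_eq_inf' (hN a) fun b => c a b + β * W b
  calc bellman N hN c β V a ≤ c a b + β * V b := bellman_le hN V hb
    _ ≤ c a b + β * (W b + C) := by gcongr; exact hVW b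
    _ = bellman N hN c β W a + β * C := by rw [bellman, hWb]; ring

lemma dist_bellman_le [Fintype X] (hβ0 : 0 ≤ β) (V W : X → ℝ) :
    dist (bellman N hN c β V) (bellman N hN c β W) ≤ β * dist V W := by
  have hle : ∀ V W : X → ℝ, ∀ a, bellman N hN c β V a ≤ bellman N hN c β W a + β * dist V W :=
    fun V W => bellman_le_add hN hβ0 V W _ fun b => by
      have hb := dist_le_pi_dist V W b
      rw [Real.dist_eq] at hb
      linarith [le_abs_self (V b - W b)]
  refine (dist_pi_le_iff (mul_nonneg hβ0 dist_nonneg)).2 fun a => ?_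
  rw [Real.dist_eq, abs_sub_le_iff]
  constructor
  · linarith [hle V W a]
  · linarith [dist_comm V W ▸ hle W V a]

lemma exists_bellman_eq_self [Fintype X] (hβ0 : 0 ≤ β) (hβ1 : β < 1) :
    ∃ V : X → ℝ, bellman N hN c β V = V := by
  lift β to NNReal using hβ0
  have hT : ContractingWith β (bellman N hN c β) :=
    ⟨hβ1, LipschitzWith.of_dist_le_mul (dist_bellman_le hN β.2)⟩
  exact ⟨_, hT.fixedPoint_isFixedPt⟩

end Bellman

section Verification

variable {X : Type*} {K : X → X → ℝ} {q : X → ℝ} {p A B M : ℝ} {W : X → ℝ} {y : ℕ → X}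

lemma le_Jcost_of_le_stepCost_add (hp : 0 < p) (hp1 : p < 1) (hK : ∀ a b, |K a b| ≤ A)
    (hq : ∀ a, |q a| ≤ B) (hW : ∀ a, |W a| ≤ M)
    (hy : ∀ n, W (y n) ≤ stepCost K q p (y n) (y (n + 1)) + (1 - p) * W (y (n + 1))) :
    W (y 0) ≤ Jcost K q p y := by
  obtain ⟨C, hC⟩ := exists_abs_Jcost_le (X := X) hp hp1 hK hq
  have := nonneg_of_mul_succ_le (d := fun n => Jcost K q p (fun m => y (m + n)) - W (y n))
    (C := C + M) (sub_nonneg.2 hp1.le) (sub_lt_self 1 hp)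
    (fun n => neg_le_of_abs_le ((abs_sub _ _).trans (add_le_add (hC _) (hW _))))
    fun n => by linarith [Jcost_tail_eq_stepCost_add hp hp1 hK hq y n, hy n]
  simpa using this

lemma Jcost_eq_of_eq_stepCost_add (hp : 0 < p) (hp1 : p < 1) (hK : ∀ a b, |K a b| ≤ A)
    (hq : ∀ a, |q a| ≤ B) (hW : ∀ a, |W a| ≤ M)
    (hy : ∀ n, W (y n) = stepCost K q p (y n) (y (n + 1)) + (1 - p) * W (y (n + 1))) :
    Jcost K q p y = W (y 0) := by
  obtain ⟨C, hC⟩ := exists_abs_Jcost_le (X := X) hp hp1 hK hq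
  have := eq_zero_of_eq_mul_succ (d := fun n => Jcost K q p (fun m => y (m + n)) - W (y n))
    (C := C + M) (sub_nonneg.2 hp1.le) (sub_lt_self 1 hp)
    (fun n => (abs_sub _ _).trans (add_le_add (hC _) (hW _)))
    fun n => by linarith [Jcost_tail_eq_stepCost_add hp hp1 hK hq y n, hy n]
  simpa [sub_eq_zero] using this

end Verification

theorem stmt14 {X : Type*} [Fintype X] (N : X → Finset X) (hN : ∀ x, (N x).Nonempty)
    (K : X → X → ℝ) (q : X → ℝ) (p : ℝ) (hp : 0 < p) (hp1 : p < 1) (x : X) :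
    ∃ μ : X → X, (∀ x', μ x' ∈ N x') ∧
      ((∀ k m : ℕ, (fun n => μ^[n] x) k = (fun n => μ^[n] x) m →
        (fun n => μ^[n] x) (k + 1) = (fun n => μ^[n] x) (m + 1)) ∧
      ∀ y : ℕ → X, y 0 = x → (∀ k, y (k + 1) ∈ N (y k)) →
        Jcost K q p (fun n => μ^[n] x) ≤ Jcost K q p y) := by
  obtain ⟨A, hK⟩ := Finite.exists_le fun ab : X × X => |K ab.1 ab.2|
  obtain ⟨B, hq⟩ := Finite.exists_le fun a => |q a|
  obtain ⟨V, hV⟩ := exists_bellman_eq_self hN (c := stepCost K q p) (sub_nonneg.2 hp1.le)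
    (sub_lt_self 1 hp)
  obtain ⟨M, hM⟩ := Finite.exists_le fun a => |V a|
  choose μ hμN hμ using fun a =>
    Finset.exists_mem_eq_inf' (hN a) fun b => stepCost K q p a b + (1 - p) * V b
  refine ⟨μ, hμN, fun k m h => by simp only [Function.iterate_succ_apply', h], fun y hy0 hy => ?_⟩
  calc Jcost K q p (fun n => μ^[n] x) = V x :=
        Jcost_eq_of_eq_stepCost_add hp hp1 (fun a b => hK (a, b)) hq hM fun n => by
          rw [Function.iterate_succ_apply', ← hμ, ← bellman, hV]
    _ ≤ Jcost K q p y := hy0 ▸ le_Jcost_of_le_stepCost_add hp hp1 (fun a b => hK (a, b)) hq hM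
        fun n => congrFun hV (y n) ▸ bellman_le hN V (hy n)
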